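/- For any indexed red-black tree t₁ of color y₁, black height n₁, and in-order traversal l₁, any key a, and any indexed red-black tree t₂ of color y₂, black height n₂, and in-order traversal l₂, with n₁ > n₂, the result of JoinRight(t₁, a, t₂) is an almost-right red-black tree with left-color index y₁, black height n₁, and in-order traversal l₁ ++ [a] ++ l₂. In particular: (1) if y₁ = black, the result is a valid red-black tree of black height n₁; (2) if y₁ = red, the result is either a valid red-black tree of black height n₁ or consists of a black-colored red-black tree, a key, and a red-colored red-black tree, both of black height n₁ (a single red-red violation at the root's right child). -/
import Mathlib


/-- Node colors for red-black trees. -/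
inductive Color where
  | red : Color
  | black : Color
deriving DecidableEq

/-- Plain binary trees with colored nodes. -/
inductive RBTree (α : Type) where
  | leaf : RBTree α
  | node : Color → RBTree α → α → RBTree α → RBTree α

namespace RBTree

variable {α : Type}

/-- The black height of a tree (computed along the left spine). -/
def blackHeight : RBTree α → ℕ
  | leaf => 0
  | node Color.red l _ _ => blackHeight l
  | node Color.black l _ _ => blackHeight l + 1

/-- The color of the root; leaves count as black. -/
def rootColor : RBTree α → Color
  | leaf => Color.black
  | node c _ _ _ => c

/-- In-order traversal. -/
def inorder : RBTree α → List α
  | leaf => []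
  | node _ l a r => inorder l ++ a :: inorder r

/-- Number of internal (key-carrying) nodes. -/
def size : RBTree α → ℕ
  | leaf => 0
  | node _ l _ r => size l + 1 + size r

/-- `IsRBT t y n` means `t` is a valid red-black tree with root color `y`
and black height `n`, mirroring the indexed inductive family `irbt`. -/
inductive IsRBT : RBTree α → Color → ℕ → Prop where
  | leaf : IsRBT leaf Color.black 0
  | red {t₁ t₂ : RBTree α} {n : ℕ} (a : α) :
      IsRBT t₁ Color.black n → IsRBT t₂ Color.black n →
      IsRBT (node Color.red t₁ a t₂) Color.red n
  | black {t₁ t₂ : RBTree α} {y₁ y₂ : Color} {n : ℕ} (a : α) :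
      IsRBT t₁ y₁ n → IsRBT t₂ y₂ n →
      IsRBT (node Color.black t₁ a t₂) Color.black (n + 1)

end RBTree
namespace RBTree

variable {α : Type}

/-- `IsARRBT t leftColor n` means `t` is an almost-right red-black tree with
black height `n`, where `leftColor` records the color of the left tree from
which it was created; a red-red violation on the right is allowed only when
`leftColor` is red.  Mirrors the indexed inductive family `arrbt`. -/
inductive IsARRBT : RBTree α → Color → ℕ → Prop where
  | valid {t : RBTree α} {y : Color} {n : ℕ} (leftColor : Color) :
      IsRBT t y n → IsARRBT t leftColor n
  | violation {t₁ t₂ : RBTree α} {n : ℕ} (a : α) :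
      IsRBT t₁ Color.black n → IsRBT t₂ Color.red n →
      IsARRBT (node Color.red t₁ a t₂) Color.red n

/-- The `JoinRight` algorithm of Blelloch et al.: attach `t₂` along the right
spine of `t₁`, rebalancing as necessary.  (The value returned when the
precondition `blackHeight t₁ > blackHeight t₂` fails is immaterial.) -/
def joinRight : RBTree α → α → RBTree α → RBTree α
  | leaf, a, t₂ => node Color.red leaf a t₂
  | node Color.red t₁₁ a₁ t₁₂, a, t₂ =>
      -- Case I: recurse; valid or violation, the resulting tree is the same
      node Color.red t₁₁ a₁ (joinRight t₁₂ a t₂)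
  | node Color.black t₁₁ a₁ t₁₂, a, t₂ =>
      if blackHeight (node Color.black t₁₁ a₁ t₁₂) = blackHeight t₂ + 1 then
        match t₂ with
        | node Color.red t₂₁ a₂ t₂₂ =>
            -- Case II
            node Color.red (node Color.black t₁₁ a₁ t₁₂) a
              (node Color.black t₂₁ a₂ t₂₂)
        | t₂ =>
            match t₁₂ with
            | node Color.red t₁₂₁ a₁₂ t₁₂₂ =>
                -- Case III
                node Color.red (node Color.black t₁₁ a₁ t₁₂₁) a₁₂
                  (node Color.black t₁₂₂ a t₂)
            | t₁₂ =>
                -- Case IV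
                node Color.black t₁₁ a₁ (node Color.red t₁₂ a t₂)
      else
        match joinRight t₁₂ a t₂ with
        | node Color.red t₁' a' (node Color.red t₂₁' a₂' t₂₂') =>
            -- Case VI: violation; rotate left
            node Color.red (node Color.black t₁₁ a₁ t₁') a'
              (node Color.black t₂₁' a₂' t₂₂')
        | r =>
            -- Case V: valid
            node Color.black t₁₁ a₁ r

end RBTree
namespace RBTree

variable {α : Type}

lemma blackHeight_of_isRBT {t : RBTree α} {y : Color} {n : ℕ}
    (h : IsRBT t y n) : t.blackHeight = n := by
  induction h with
  | leaf => rfl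
  | red a h1 h2 ih1 ih2 => simpa [blackHeight] using ih1
  | black a h1 h2 ih1 ih2 => simp [blackHeight, ih1]

lemma joinRight_core (t₁ : RBTree α) :
    ∀ (a : α) (t₂ : RBTree α) {y₁ y₂ : Color} {n₁ n₂ : ℕ},
    IsRBT t₁ y₁ n₁ → IsRBT t₂ y₂ n₂ → n₁ > n₂ →
    IsARRBT (joinRight t₁ a t₂) y₁ n₁ ∧
    (joinRight t₁ a t₂).inorder = t₁.inorder ++ a :: t₂.inorder := by
  induction t₁ with
  | leaf =>
    intro a t₂ y₁ y₂ n₁ n₂ h₁ h₂ hn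
    cases h₁; omega
  | node c t₁₁ a₁ t₁₂ ih1 ih2 =>
    intro a t₂ y₁ y₂ n₁ n₂ h₁ h₂ hn
    cases h₁ with
    | red _ h11 h12 =>
      obtain ⟨har, hio⟩ := ih2 a t₂ h12 h₂ hn
      have hr : ∃ y, IsRBT (joinRight t₁₂ a t₂) y n₁ := by
        generalize hre : joinRight t₁₂ a t₂ = r at har
        cases har with
        | valid _ h => exact ⟨_, h⟩
      obtain ⟨y, hy⟩ := hr
      rw [show joinRight (node Color.red t₁₁ a₁ t₁₂) a t₂
          = node Color.red t₁₁ a₁ (joinRight t₁₂ a t₂) from rfl]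
      refine ⟨?_, by simp [inorder, hio]⟩
      cases y with
      | red => exact IsARRBT.violation a₁ h11 hy
      | black => exact IsARRBT.valid _ (IsRBT.red a₁ h11 hy)
    | black _ h11 h12 =>
      rename_i y₁₁ y₁₂ n
      have hb1 : (RBTree.node Color.black t₁₁ a₁ t₁₂).blackHeight = n + 1 := by
        simp [blackHeight, blackHeight_of_isRBT h11]
      have hb2 : t₂.blackHeight = n₂ := blackHeight_of_isRBT h₂
      rw [joinRight.eq_def]
      dsimp only
      rw [hb1, hb2]
      by_cases hc : n = n₂
      · subst hc
        rw [if_pos rfl]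
        cases h₂ with
        | leaf =>
          cases h12 with
          | leaf =>
            exact ⟨IsARRBT.valid _ (IsRBT.black a₁ h11
              (IsRBT.red a IsRBT.leaf IsRBT.leaf)), by simp [inorder]⟩
          | red _ h121 h122 =>
            exact ⟨IsARRBT.valid _ (IsRBT.red _ (IsRBT.black a₁ h11 h121)
              (IsRBT.black a h122 IsRBT.leaf)), by simp [inorder]⟩
        | red _ h21 h22 =>
          exact ⟨IsARRBT.valid _ (IsRBT.red a (IsRBT.black a₁ h11 h12)
            (IsRBT.black _ h21 h22)), by simp [inorder]⟩
        | black _ h21 h22 =>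
          cases h12 with
          | red _ h121 h122 =>
            exact ⟨IsARRBT.valid _ (IsRBT.red _ (IsRBT.black a₁ h11 h121)
              (IsRBT.black a h122 (IsRBT.black _ h21 h22))), by simp [inorder]⟩
          | black _ h121 h122 =>
            exact ⟨IsARRBT.valid _ (IsRBT.black a₁ h11
              (IsRBT.red a (IsRBT.black _ h121 h122) (IsRBT.black _ h21 h22))),
              by simp [inorder]⟩
      · rw [if_neg (by omega)]
        have hn' : n > n₂ := by omega
        obtain ⟨har, hio⟩ := ih2 a t₂ h12 h₂ hn'
        generalize hre : joinRight t₁₂ a t₂ = r at har hio ⊢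
        cases har with
        | valid _ h =>
          have hok : ∀ (s : RBTree α), s = r →
              IsARRBT (node Color.black t₁₁ a₁ r) Color.black (n + 1) ∧
              (node Color.black t₁₁ a₁ r).inorder
                = (node Color.black t₁₁ a₁ t₁₂).inorder ++ a :: t₂.inorder := by
            intro s hs
            refine ⟨IsARRBT.valid _ (IsRBT.black a₁ h11 h), ?_⟩
            simp [inorder, hio]
          cases r with
          | leaf => exact hok _ rfl
          | node rc rl ra rr =>
            cases rc with
            | black => exact hok _ rfl
            | red =>
              cases rr with
              | leaf => exact hok _ rfl
              | node rrc u b v =>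
                cases rrc with
                | black => exact hok _ rfl
                | red =>
                  exfalso
                  cases h with
                  | red _ hl hr => cases hr
        | violation a' hb hr =>
          cases hr with
          | red _ hu hv =>
            refine ⟨IsARRBT.valid _ (IsRBT.red _ (IsRBT.black a₁ h11 hb)
              (IsRBT.black _ hu hv)), ?_⟩
            simp only [inorder, List.append_assoc, List.cons_append] at hio ⊢
            rw [← hio]

end RBTree

/-- **JoinRight specification** (Lemma: `joinRight` returns an almost-right
red-black tree).  For indexed red-black trees `t₁` (color `y₁`, black height
`n₁`, in-order traversal `l₁`) and `t₂` (color `y₂`, black height `n₂`,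
in-order traversal `l₂`) with `n₁ > n₂`, `JoinRight(t₁, a, t₂)` is an
almost-right red-black tree with left-color index `y₁`, black height `n₁`,
and in-order traversal `l₁ ++ a :: l₂`.  In particular, if `y₁ = black` the
result is a valid red-black tree of black height `n₁`, and if `y₁ = red` the
result is either a valid red-black tree of black height `n₁` or a red node
whose children are a black and a red red-black tree, both of black height
`n₁` (a single red-red violation at the root's right child). -/
theorem joinRight_spec {α : Type} {y₁ y₂ : Color} {n₁ n₂ : ℕ} {l₁ l₂ : List α}
    (t₁ : RBTree α) (a : α) (t₂ : RBTree α)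
    (h₁ : RBTree.IsRBT t₁ y₁ n₁) (hl₁ : t₁.inorder = l₁)
    (h₂ : RBTree.IsRBT t₂ y₂ n₂) (hl₂ : t₂.inorder = l₂)
    (hn : n₁ > n₂) :
    RBTree.IsARRBT (RBTree.joinRight t₁ a t₂) y₁ n₁ ∧
    (RBTree.joinRight t₁ a t₂).inorder = l₁ ++ a :: l₂ ∧
    (y₁ = Color.black →
      ∃ y : Color, RBTree.IsRBT (RBTree.joinRight t₁ a t₂) y n₁) ∧
    (y₁ = Color.red →
      (∃ y : Color, RBTree.IsRBT (RBTree.joinRight t₁ a t₂) y n₁) ∨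
      (∃ (tl : RBTree α) (a' : α) (tr : RBTree α),
        RBTree.joinRight t₁ a t₂ = RBTree.node Color.red tl a' tr ∧
        RBTree.IsRBT tl Color.black n₁ ∧ RBTree.IsRBT tr Color.red n₁)) := by
  
  subst hl₁ hl₂
  obtain ⟨har, hio⟩ := RBTree.joinRight_core t₁ a t₂ h₁ h₂ hn
  refine ⟨har, hio, ?_, ?_⟩
  · rintro rfl
    generalize hre : RBTree.joinRight t₁ a t₂ = r at har
    cases har with
    | valid _ h => exact ⟨_, h⟩
  · rintro rfl
    generalize hre : RBTree.joinRight t₁ a t₂ = r at har ⊢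
    cases har with
    | valid _ h => exact Or.inl ⟨_, h⟩
    | violation a' hb hr => exact Or.inr ⟨_, a', _, rfl, hb, hr⟩
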